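/- Let n ≥ 1, let γ > 0, δ ≥ 0, and L ≥ 1 be constants with θ := γL + δ/L < 1, and let Y_0, Y_1, …, Y_n ≥ 0 and Q_1, …, Q_n ≥ 0 be real numbers satisfying Y_i ≤ γ·Y_{i−1} + δ·Y_{i+1} + Q_i for every i = 1, …, n, where Y_{n+1} := 0. Then max_{1 ≤ i ≤ n} (L^i·Y_i) ≤ (1 − θ)^{−1}·max_{1 ≤ i ≤ n} (L^i·Q_i) + (1 − θ)^{−1}·γ·L·Y_0; consequently, for every i = 1, …, n, Y_i ≤ (1 − θ)^{−1}·L^{n−1}·max_{1 ≤ j ≤ n} Q_j + (1 − θ)^{−1}·γ·Y_0. -/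
import Mathlib

set_option maxHeartbeats 800000


/-- The weighted discrete small-gain inequality underlying the trajectory-based
one-sided string-stability theorem. -/
theorem discrete_small_gain_weighted (n : ℕ) (hn : 1 ≤ n)
    (γ δ L : ℝ) (hγ : 0 < γ) (hδ : 0 ≤ δ) (hL : 1 ≤ L)
    (θ : ℝ) (hθdef : θ = γ * L + δ / L) (hθ : θ < 1)
    (Y Q : ℕ → ℝ)
    (hY : ∀ i, i ≤ n → 0 ≤ Y i)
    (hYtop : Y (n + 1) = 0)
    (hQ : ∀ i, 1 ≤ i → i ≤ n → 0 ≤ Q i)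
    (hrec : ∀ i, 1 ≤ i → i ≤ n → Y i ≤ γ * Y (i - 1) + δ * Y (i + 1) + Q i) :
    (Finset.Icc 1 n).sup' (Finset.nonempty_Icc.mpr hn) (fun i => L ^ i * Y i) ≤
      (1 - θ)⁻¹ * ((Finset.Icc 1 n).sup' (Finset.nonempty_Icc.mpr hn) fun i => L ^ i * Q i) +
      (1 - θ)⁻¹ * γ * L * Y 0 ∧
    ∀ i, 1 ≤ i → i ≤ n →
      Y i ≤ (1 - θ)⁻¹ * L ^ (n - 1) * ((Finset.Icc 1 n).sup' (Finset.nonempty_Icc.mpr hn) Q) +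
        (1 - θ)⁻¹ * γ * Y 0 := by
  have hLpos : (0:ℝ) < L := lt_of_lt_of_le one_pos hL
  have hθ0 : 0 ≤ θ := by rw [hθdef]; positivity
  have h1θ : (0:ℝ) < 1 - θ := by linarith
  have ne : (Finset.Icc 1 n).Nonempty := Finset.nonempty_Icc.mpr hn
  set M := (Finset.Icc 1 n).sup' ne (fun i => L ^ i * Y i) with hMdef
  set S := (Finset.Icc 1 n).sup' ne (fun i => L ^ i * Q i) with hSdef
  have h1mem : (1:ℕ) ∈ Finset.Icc 1 n := Finset.mem_Icc.mpr ⟨le_refl _, hn⟩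
  have hY0 : 0 ≤ Y 0 := hY 0 (by omega)
  have hM0 : 0 ≤ M := by
    have h := Finset.le_sup' (fun i => L ^ i * Y i) h1mem
    have h2 : 0 ≤ L ^ 1 * Y 1 := mul_nonneg (by positivity) (hY 1 hn)
    exact le_trans h2 h
  have hS0 : 0 ≤ S := by
    have h := Finset.le_sup' (fun i => L ^ i * Q i) h1mem
    have h2 : 0 ≤ L ^ 1 * Q 1 := mul_nonneg (by positivity) (hQ 1 le_rfl hn)
    exact le_trans h2 h
  have key : ∀ i ∈ Finset.Icc 1 n, L ^ i * Y i ≤ θ * M + S + γ * L * Y 0 := by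
    intro i hi
    obtain ⟨hi1, hin⟩ := Finset.mem_Icc.mp hi
    have hrec' := hrec i hi1 hin
    have hLi : (0:ℝ) < L ^ i := by positivity
    have hpow : L ^ i = L * L ^ (i - 1) := by
      rw [← pow_succ']; congr 1; omega
    have t1 : γ * L * (L ^ (i-1) * Y (i-1)) ≤ γ * L * M + γ * L * Y 0 := by
      rcases eq_or_lt_of_le hi1 with h | h
      · have hi0 : i - 1 = 0 := by omega
        rw [hi0]
        have : 0 ≤ γ * L * M := mul_nonneg (by positivity) hM0
        nlinarith
      · have hmem : i - 1 ∈ Finset.Icc 1 n := Finset.mem_Icc.mpr ⟨by omega, by omega⟩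
        have hle : L ^ (i-1) * Y (i-1) ≤ M := Finset.le_sup' (fun j => L ^ j * Y j) hmem
        have h3 : 0 ≤ γ * L * Y 0 := mul_nonneg (by positivity) hY0
        have h4 := mul_le_mul_of_nonneg_left hle (show (0:ℝ) ≤ γ * L by positivity)
        linarith
    have t2 : δ / L * (L ^ (i+1) * Y (i+1)) ≤ δ / L * M := by
      rcases eq_or_lt_of_le hin with h | h
      · rw [h, hYtop]
        have : 0 ≤ δ / L := by positivity
        nlinarith
      · have hmem : i + 1 ∈ Finset.Icc 1 n := Finset.mem_Icc.mpr ⟨by omega, by omega⟩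
        have hle : L ^ (i+1) * Y (i+1) ≤ M := Finset.le_sup' (fun j => L ^ j * Y j) hmem
        have hdl : (0:ℝ) ≤ δ / L := by positivity
        have h4 := mul_le_mul_of_nonneg_left hle hdl
        linarith
    have t3 : L ^ i * Q i ≤ S := Finset.le_sup' (fun j => L ^ j * Q j) hi
    have expand : L ^ i * Y i ≤
        γ * L * (L ^ (i-1) * Y (i-1)) + δ / L * (L ^ (i+1) * Y (i+1)) + L ^ i * Q i := by
      have h2 : L ^ (i+1) = L ^ i * L := pow_succ L i
      have hLne : L ≠ 0 := ne_of_gt hLpos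
      have heq : γ * L * (L ^ (i-1) * Y (i-1)) + δ / L * (L ^ (i+1) * Y (i+1)) + L ^ i * Q i
          = L ^ i * (γ * Y (i-1) + δ * Y (i+1) + Q i) := by
        rw [h2]
        field_simp
        rw [hpow]
        ring
      rw [heq]
      nlinarith
    rw [hθdef]
    nlinarith
  have hMle : M ≤ θ * M + S + γ * L * Y 0 := Finset.sup'_le ne _ key
  have hMbound : M ≤ (1 - θ)⁻¹ * S + (1 - θ)⁻¹ * γ * L * Y 0 := by
    have h : (1 - θ) * M ≤ S + γ * L * Y 0 := by linarith
    have hinv : (0:ℝ) < (1 - θ)⁻¹ := by positivity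
    calc M = (1 - θ)⁻¹ * ((1 - θ) * M) := by field_simp
      _ ≤ (1 - θ)⁻¹ * (S + γ * L * Y 0) := by
          exact mul_le_mul_of_nonneg_left h hinv.le
      _ = (1 - θ)⁻¹ * S + (1 - θ)⁻¹ * γ * L * Y 0 := by ring
  refine ⟨hMbound, ?_⟩
  intro i hi1 hin
  set T := (Finset.Icc 1 n).sup' ne Q with hTdef
  have hT0 : 0 ≤ T := le_trans (hQ 1 le_rfl hn) (Finset.le_sup' Q h1mem)
  have hST : S ≤ L ^ n * T := by
    apply Finset.sup'_le
    intro j hj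
    obtain ⟨hj1, hjn⟩ := Finset.mem_Icc.mp hj
    have h1 : L ^ j ≤ L ^ n := pow_le_pow_right₀ hL hjn
    have h2 : Q j ≤ T := Finset.le_sup' Q hj
    have hQj := hQ j hj1 hjn
    nlinarith [pow_pos hLpos j, pow_pos hLpos n]
  have hYiM : L * Y i ≤ M := by
    have h1 : L ≤ L ^ i := le_self_pow₀ hL (by omega)
    have h2 : L ^ i * Y i ≤ M := Finset.le_sup' (fun j => L ^ j * Y j) (Finset.mem_Icc.mpr ⟨hi1, hin⟩)
    have hYi := hY i hin
    nlinarith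
  have hpown : L ^ n = L * L ^ (n - 1) := by
    rw [← pow_succ']; congr 1; omega
  have hinv : (0:ℝ) ≤ (1 - θ)⁻¹ := by positivity
  have hfinal : L * Y i ≤ L * ((1 - θ)⁻¹ * L ^ (n-1) * T + (1 - θ)⁻¹ * γ * Y 0) := by
    have hSb : (1 - θ)⁻¹ * S ≤ (1 - θ)⁻¹ * (L ^ n * T) := mul_le_mul_of_nonneg_left hST hinv
    calc L * Y i ≤ M := hYiM
      _ ≤ (1 - θ)⁻¹ * S + (1 - θ)⁻¹ * γ * L * Y 0 := hMbound
      _ ≤ (1 - θ)⁻¹ * (L ^ n * T) + (1 - θ)⁻¹ * γ * L * Y 0 := by linarith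
      _ = L * ((1 - θ)⁻¹ * L ^ (n-1) * T + (1 - θ)⁻¹ * γ * Y 0) := by rw [hpown]; ring
  exact le_of_mul_le_mul_left hfinal hLpos
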